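/- Let (B,β), (H,α) be finite-dimensional monoidal Hom-Hopf algebras forming a bicrossproduct (B#H, β#α). Define ▷: B*⊗H→H by f▷h = Σ ⟨f, β(h_(1))⟩ α²(h_(0)) and ◁: B*⊗H→B* by ⟨f◁h, a⟩ = ⟨f, α⁻¹(h)·β⁻²(a)⟩. Then (H,α) is a left (B*,(β⁻¹)*)-Hom-module coalgebra and (B*,(β⁻¹)*) is a right (H,α)-Hom-module coalgebra. -/
import Mathlib


open TensorProduct LinearMap

/-- A unital monoidal Hom-associative algebra. -/
structure HomAlg (k : Type*) [Field k] (A : Type*) [AddCommGroup A] [Module k A] where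
  au : A ≃ₗ[k] A
  mul : A →ₗ[k] A →ₗ[k] A
  one : A
  hom_assoc : ∀ x y z : A, mul (au x) (mul y z) = mul (mul x y) (au z)
  one_mul' : ∀ x : A, mul one x = au x
  mul_one' : ∀ x : A, mul x one = au x
  au_mul : ∀ x y : A, au (mul x y) = mul (au x) (au y)
  au_one : au one = one

/-- A counital monoidal Hom-coassociative coalgebra. -/
structure HomCoalg (k : Type*) [Field k] (C : Type*) [AddCommGroup C] [Module k C] where
  au : C ≃ₗ[k] C
  comul : C →ₗ[k] C ⊗[k] C
  counit : C →ₗ[k] k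
  hom_coassoc : (TensorProduct.map au.symm.toLinearMap comul) ∘ₗ comul
    = (TensorProduct.assoc k C C C).toLinearMap ∘ₗ (TensorProduct.map comul au.symm.toLinearMap) ∘ₗ comul
  counit_comul : ∀ c : C,
    (TensorProduct.lid k C) ((TensorProduct.map counit LinearMap.id) (comul c)) = au.symm c
  comul_counit : ∀ c : C,
    (TensorProduct.rid k C) ((TensorProduct.map LinearMap.id counit) (comul c)) = au.symm c
  comul_au : ∀ c : C, comul (au c) = (TensorProduct.map au.toLinearMap au.toLinearMap) (comul c)
  counit_au : ∀ c : C, counit (au c) = counit c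

/-- A monoidal Hom-bialgebra. -/
structure HomBialg (k : Type*) [Field k] (H : Type*) [AddCommGroup H] [Module k H]
    extends HomAlg k H, HomCoalg k H where
  comul_mul : ∀ x y : H, comul (mul x y)
    = (TensorProduct.map (TensorProduct.lift mul) (TensorProduct.lift mul))
        ((TensorProduct.tensorTensorTensorComm k H H H H) (comul x ⊗ₜ[k] comul y))
  comul_one : comul one = one ⊗ₜ[k] one
  counit_mul : ∀ x y : H, counit (mul x y) = counit x * counit y
  counit_one : counit one = 1

/-- A monoidal Hom-Hopf algebra. -/
structure HomHopf (k : Type*) [Field k] (H : Type*) [AddCommGroup H] [Module k H]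
    extends HomBialg k H where
  S : H →ₗ[k] H
  S_au : S ∘ₗ au.toLinearMap = au.toLinearMap ∘ₗ S
  S_mul_id : ∀ x : H,
    TensorProduct.lift mul ((TensorProduct.map S LinearMap.id) (comul x)) = counit x • one
  id_mul_S : ∀ x : H,
    TensorProduct.lift mul ((TensorProduct.map LinearMap.id S) (comul x)) = counit x • one

/-- The Hom-smash coproduct comultiplication on `B ⊗ H`:
`Δ(a # h) = Σ a₁ # α(h₁₍₀₎) ⊗ β⁻¹(a₂)·h₁₍₁₎ # h₂`. -/
noncomputable def smashComul {k : Type*} [Field k] {B H : Type*}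
    [AddCommGroup B] [Module k B] [AddCommGroup H] [Module k H]
    (βB : B ≃ₗ[k] B) (mulB : B →ₗ[k] B →ₗ[k] B) (comulB : B →ₗ[k] B ⊗[k] B)
    (αH : H ≃ₗ[k] H) (comulH : H →ₗ[k] H ⊗[k] H) (ρ : H →ₗ[k] H ⊗[k] B) :
    B ⊗[k] H →ₗ[k] (B ⊗[k] H) ⊗[k] (B ⊗[k] H) :=
  (TensorProduct.map
      (LinearMap.lTensor B αH.toLinearMap)
      ((LinearMap.rTensor H (TensorProduct.lift (mulB ∘ₗ βB.symm.toLinearMap)))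
        ∘ₗ (TensorProduct.assoc k B B H).symm.toLinearMap))
  ∘ₗ (TensorProduct.tensorTensorTensorComm k B B H (B ⊗[k] H)).toLinearMap
  ∘ₗ (LinearMap.lTensor (B ⊗[k] B)
        ((TensorProduct.assoc k H B H).toLinearMap ∘ₗ (LinearMap.rTensor H ρ)))
  ∘ₗ (TensorProduct.map comulB comulH)

/-- The Hom-smash counit `ε(a # h) = ε_B(a) ε_H(h)` on `B ⊗ H`. -/
noncomputable def smashCounit {k : Type*} [Field k] {B H : Type*}
    [AddCommGroup B] [Module k B] [AddCommGroup H] [Module k H]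
    (counitB : B →ₗ[k] k) (counitH : H →ₗ[k] k) : B ⊗[k] H →ₗ[k] k :=
  (LinearMap.mul' k k) ∘ₗ (TensorProduct.map counitB counitH)

section Bicross

variable {k : Type*} [Field k] {B H : Type*}
  [AddCommGroup B] [Module k B] [AddCommGroup H] [Module k H]

/-- The Hom-smash product multiplication on `B ⊗ H` (as a map on the tensor square):
`(a # h)(b # g) = Σ a(h₁ · β⁻¹(b)) # α(h₂)g`. -/
noncomputable def smashMulT
    (βB : B ≃ₗ[k] B) (mulB : B →ₗ[k] B →ₗ[k] B)
    (αH : H ≃ₗ[k] H) (mulH : H →ₗ[k] H →ₗ[k] H) (comulH : H →ₗ[k] H ⊗[k] H)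
    (act : H →ₗ[k] B →ₗ[k] B) :
    (B ⊗[k] H) ⊗[k] (B ⊗[k] H) →ₗ[k] B ⊗[k] H :=
  (TensorProduct.map
      ((TensorProduct.lift mulB)
        ∘ₗ (LinearMap.lTensor B ((TensorProduct.lift act) ∘ₗ (LinearMap.lTensor H βB.symm.toLinearMap)))
        ∘ₗ (TensorProduct.assoc k B H B).toLinearMap)
      (TensorProduct.lift (mulH ∘ₗ αH.toLinearMap)))
  ∘ₗ (TensorProduct.tensorTensorTensorComm k (B ⊗[k] H) H B H).toLinearMap
  ∘ₗ (LinearMap.rTensor (B ⊗[k] H)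
        ((TensorProduct.assoc k B H H).symm.toLinearMap ∘ₗ (LinearMap.lTensor B comulH)))

/-- Bicrossproduct condition (a):
`Δ_B(h·b) = Σ α(h₁₍₀₎)·b₁ ⊗ β(h₁₍₁₎)(α⁻¹(h₂)·β⁻¹(b₂))`. -/
noncomputable def bicrossCondA
    (βB : B ≃ₗ[k] B) (mulB : B →ₗ[k] B →ₗ[k] B) (comulB : B →ₗ[k] B ⊗[k] B)
    (αH : H ≃ₗ[k] H) (comulH : H →ₗ[k] H ⊗[k] H)
    (act : H →ₗ[k] B →ₗ[k] B) (ρ : H →ₗ[k] H ⊗[k] B) : Prop :=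
  ∀ (h : H) (b : B), comulB (act h b)
    = ((LinearMap.lTensor B (TensorProduct.lift mulB))
        ∘ₗ (TensorProduct.assoc k B B B).toLinearMap
        ∘ₗ (TensorProduct.map
             ((TensorProduct.map (TensorProduct.lift (act ∘ₗ αH.toLinearMap)) βB.toLinearMap)
               ∘ₗ (TensorProduct.assoc k H B B).symm.toLinearMap
               ∘ₗ (LinearMap.lTensor H (TensorProduct.comm k B B).toLinearMap)
               ∘ₗ (TensorProduct.assoc k H B B).toLinearMap
               ∘ₗ (LinearMap.rTensor B ρ))
             ((TensorProduct.lift act)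
               ∘ₗ (TensorProduct.map αH.symm.toLinearMap βB.symm.toLinearMap)))
        ∘ₗ (TensorProduct.tensorTensorTensorComm k H H B B).toLinearMap)
      (comulH h ⊗ₜ[k] comulB b)

/-- Bicrossproduct condition (d):
`Σ h₂₍₀₎ ⊗ (h₁·b)β²(h₂₍₁₎) = Σ h₁₍₀₎ ⊗ β²(h₁₍₁₎)(h₂·b)`. -/
noncomputable def bicrossCondD
    (βB : B ≃ₗ[k] B) (mulB : B →ₗ[k] B →ₗ[k] B)
    (αH : H ≃ₗ[k] H) (comulH : H →ₗ[k] H ⊗[k] H)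
    (act : H →ₗ[k] B →ₗ[k] B) (ρ : H →ₗ[k] H ⊗[k] B) : Prop :=
  ∀ (h : H) (b : B),
    ((LinearMap.lTensor H
        ((TensorProduct.lift (mulB ∘ₗ act.flip b))
          ∘ₗ (LinearMap.lTensor H (βB.toLinearMap ∘ₗ βB.toLinearMap))))
      ∘ₗ (TensorProduct.assoc k H H B).toLinearMap
      ∘ₗ (LinearMap.rTensor B (TensorProduct.comm k H H).toLinearMap)
      ∘ₗ (TensorProduct.assoc k H H B).symm.toLinearMap
      ∘ₗ (LinearMap.lTensor H ρ)) (comulH h)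
    = ((LinearMap.lTensor H
          ((TensorProduct.lift (mulB ∘ₗ (βB.toLinearMap ∘ₗ βB.toLinearMap)))
            ∘ₗ (LinearMap.lTensor B (act.flip b))))
        ∘ₗ (TensorProduct.assoc k H B H).toLinearMap
        ∘ₗ (LinearMap.rTensor H ρ)) (comulH h)

/-- Bicrossproduct condition (e):
`ρ(hg) = Σ α(h₁₍₀₎)g₍₀₎ ⊗ β(h₁₍₁₎)(α⁻¹(h₂)·β⁻¹(g₍₁₎))`.
The multiplications of `H` used on the two sides are passed separately (`mulH'`, `mulH`),
so that the same formula covers the opposite-algebra case. -/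
noncomputable def bicrossCondE
    (βB : B ≃ₗ[k] B) (mulB : B →ₗ[k] B →ₗ[k] B)
    (αH : H ≃ₗ[k] H) (mulH : H →ₗ[k] H →ₗ[k] H) (comulH : H →ₗ[k] H ⊗[k] H)
    (act : H →ₗ[k] B →ₗ[k] B) (ρ : H →ₗ[k] H ⊗[k] B) : Prop :=
  ∀ (h g : H), ρ (mulH h g)
    = ((LinearMap.lTensor H (TensorProduct.lift mulB))
        ∘ₗ (TensorProduct.assoc k H B B).toLinearMap
        ∘ₗ (TensorProduct.map
              ((TensorProduct.map (TensorProduct.lift (mulH ∘ₗ αH.toLinearMap)) βB.toLinearMap)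
                ∘ₗ (TensorProduct.assoc k H H B).symm.toLinearMap
                ∘ₗ (LinearMap.lTensor H (TensorProduct.comm k B H).toLinearMap)
                ∘ₗ (TensorProduct.assoc k H B H).toLinearMap)
              ((TensorProduct.lift act)
                ∘ₗ (TensorProduct.map αH.symm.toLinearMap βB.symm.toLinearMap)))
        ∘ₗ (TensorProduct.tensorTensorTensorComm k (H ⊗[k] B) H H B).toLinearMap
        ∘ₗ (LinearMap.rTensor (H ⊗[k] B) (LinearMap.rTensor H ρ)))
      (comulH h ⊗ₜ[k] ρ g)

end Bicross
set_option maxHeartbeats 1000000 in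
set_option synthInstance.maxHeartbeats 400000 in
/-- Let `(B,β),(H,α)` be finite-dimensional monoidal Hom-Hopf algebras
forming a bicrossproduct `(B#H, β#α)`. With `f▷h = Σ ⟨f, β(h₍₁₎)⟩ α²(h₍₀₎)` and
`⟨f◁h, a⟩ = ⟨f, α⁻¹(h)·β⁻²(a)⟩`, `(H,α)` is a left `(B*,(β⁻¹)*)`-Hom-module coalgebra
and `(B*,(β⁻¹)*)` is a right `(H,α)`-Hom-module coalgebra. -/
theorem dual_actions_module_coalgebras
    {k : Type*} [Field k] {B H : Type*}
    [AddCommGroup B] [Module k B] [FiniteDimensional k B]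
    [AddCommGroup H] [Module k H] [FiniteDimensional k H]
    (Bb : HomHopf k B) (Hh : HomHopf k H)
    (act : H →ₗ[k] B →ₗ[k] B) (ρ : H →ₗ[k] H ⊗[k] B)
    -- (B,β) is a left (H,α)-Hom-module algebra:
    (hact_one : ∀ b : B, act Hh.one b = Bb.au b)
    (hact_assoc : ∀ (h g : H) (b : B),
      act (Hh.au h) (act g b) = act (Hh.mul h g) (Bb.au b))
    (hact_au : ∀ (h : H) (b : B), Bb.au (act h b) = act (Hh.au h) (Bb.au b))
    (hact_mul : ∀ (h : H) (a b : B), act h (Bb.mul a b)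
      = TensorProduct.lift Bb.mul
          ((TensorProduct.map (act.flip a) (act.flip b)) (Hh.comul h)))
    (hact_unit : ∀ h : H, act h Bb.one = Hh.counit h • Bb.one)
    -- (H,α) is a right (B,β)-Hom-comodule coalgebra:
    (hρau : ∀ h : H, ρ (Hh.au h)
      = (TensorProduct.map Hh.au.toLinearMap Bb.au.toLinearMap) (ρ h))
    (hρcounit : ∀ h : H,
      (TensorProduct.rid k H) ((TensorProduct.map LinearMap.id Bb.counit) (ρ h)) = Hh.au.symm h)
    (hρcoassoc : (TensorProduct.map Hh.au.symm.toLinearMap Bb.comul) ∘ₗ ρ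
      = (TensorProduct.assoc k H B B).toLinearMap
          ∘ₗ (TensorProduct.map ρ Bb.au.symm.toLinearMap) ∘ₗ ρ)
    (hcc1 : ∀ h : H,
      (TensorProduct.map Hh.comul LinearMap.id) (ρ h)
        = (LinearMap.lTensor (H ⊗[k] H) (TensorProduct.lift Bb.mul))
            ((TensorProduct.tensorTensorTensorComm k H B H B)
              ((TensorProduct.map ρ ρ) (Hh.comul h))))
    (hcc2 : ∀ h : H,
      (TensorProduct.lid k B) ((TensorProduct.map Hh.counit LinearMap.id) (ρ h))
        = Hh.counit h • Bb.one)
    -- the bicrossproduct conditions (a)–(e):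
    (ha : bicrossCondA Bb.au Bb.mul Bb.comul Hh.au Hh.comul act ρ)
    (hb : ∀ (h : H) (b : B), Bb.counit (act h b) = Hh.counit h * Bb.counit b)
    (hc : ρ Hh.one = Hh.one ⊗ₜ[k] Bb.one)
    (hd : bicrossCondD Bb.au Bb.mul Hh.au Hh.comul act ρ)
    (he : bicrossCondE Bb.au Bb.mul Hh.au Hh.mul Hh.comul act ρ)
    -- convolution product and dual coproduct on B* = Dual k B:
    (mulD : Module.Dual k B →ₗ[k] Module.Dual k B →ₗ[k] Module.Dual k B)
    (hmulD : ∀ (f g : Module.Dual k B) (a : B),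
      mulD f g a = LinearMap.mul' k k ((TensorProduct.map f g) (Bb.comul a)))
    (comulD : Module.Dual k B →ₗ[k] Module.Dual k B ⊗[k] Module.Dual k B)
    (hcomulD : ∀ f : Module.Dual k B,
      TensorProduct.dualDistrib k B B (comulD f) = f ∘ₗ TensorProduct.lift Bb.mul)
    -- the two dual actions:
    (actL : Module.Dual k B →ₗ[k] H →ₗ[k] H)
    (hactL : ∀ (f : Module.Dual k B) (h : H),
      actL f h = (TensorProduct.rid k H)
        ((TensorProduct.map (Hh.au.toLinearMap ∘ₗ Hh.au.toLinearMap)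
            (f ∘ₗ Bb.au.toLinearMap)) (ρ h)))
    (actR : Module.Dual k B →ₗ[k] H →ₗ[k] Module.Dual k B)
    (hactR : ∀ (f : Module.Dual k B) (h : H) (a : B),
      actR f h a = f (act (Hh.au.symm h) (Bb.au.symm (Bb.au.symm a)))) :
    -- (H,α) is a left (B*,(β⁻¹)*)-Hom-module coalgebra:
    ((∀ h : H, actL Bb.counit h = Hh.au h)
      ∧ (∀ (f g : Module.Dual k B) (h : H),
          actL (f ∘ₗ Bb.au.symm.toLinearMap) (actL g h) = actL (mulD f g) (Hh.au h))
      ∧ (∀ (f : Module.Dual k B) (h : H),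
          Hh.au (actL f h) = actL (f ∘ₗ Bb.au.symm.toLinearMap) (Hh.au h))
      ∧ (∀ (f : Module.Dual k B) (h : H), Hh.comul (actL f h)
          = (TensorProduct.map (TensorProduct.lift actL) (TensorProduct.lift actL))
              ((TensorProduct.tensorTensorTensorComm k
                  (Module.Dual k B) (Module.Dual k B) H H)
                (comulD f ⊗ₜ[k] Hh.comul h)))
      ∧ (∀ (f : Module.Dual k B) (h : H),
          Hh.counit (actL f h) = f Bb.one * Hh.counit h))
    -- (B*,(β⁻¹)*) is a right (H,α)-Hom-module coalgebra:
    ∧ ((∀ f : Module.Dual k B, actR f Hh.one = f ∘ₗ Bb.au.symm.toLinearMap)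
      ∧ (∀ (f : Module.Dual k B) (h g : H),
          actR (f ∘ₗ Bb.au.symm.toLinearMap) (Hh.mul h g) = actR (actR f h) (Hh.au g))
      ∧ (∀ (f : Module.Dual k B) (h : H),
          (actR f h) ∘ₗ Bb.au.symm.toLinearMap
            = actR (f ∘ₗ Bb.au.symm.toLinearMap) (Hh.au h))
      ∧ (∀ (f : Module.Dual k B) (h : H), comulD (actR f h)
          = (TensorProduct.map (TensorProduct.lift actR) (TensorProduct.lift actR))
              ((TensorProduct.tensorTensorTensorComm k
                  (Module.Dual k B) (Module.Dual k B) H H)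
                (comulD f ⊗ₜ[k] Hh.comul h)))
      ∧ (∀ (f : Module.Dual k B) (h : H),
          (actR f h) Bb.one = f Bb.one * Hh.counit h)) := by
  classical
  -- elementary consequences of the structure axioms
  have εβ' : ∀ b : B, Bb.counit (Bb.au.symm b) = Bb.counit b := fun b => by
    conv_rhs => rw [← Bb.au.apply_symm_apply b, Bb.counit_au]
  have εα' : ∀ x : H, Hh.counit (Hh.au.symm x) = Hh.counit x := fun x => by
    conv_rhs => rw [← Hh.au.apply_symm_apply x, Hh.counit_au]
  have oneβ' : Bb.au.symm Bb.one = Bb.one := Bb.au.symm_apply_eq.mpr Bb.au_one.symm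
  have oneα' : Hh.au.symm Hh.one = Hh.one := Hh.au.symm_apply_eq.mpr Hh.au_one.symm
  have mulα' : ∀ x y : H, Hh.au.symm (Hh.mul x y) = Hh.mul (Hh.au.symm x) (Hh.au.symm y) :=
    fun x y => Hh.au.injective (by
      rw [Hh.au.apply_symm_apply, Hh.au_mul, Hh.au.apply_symm_apply, Hh.au.apply_symm_apply])
  have mulβ' : ∀ x y : B, Bb.au.symm (Bb.mul x y) = Bb.mul (Bb.au.symm x) (Bb.au.symm y) :=
    fun x y => Bb.au.injective (by
      rw [Bb.au.apply_symm_apply, Bb.au_mul, Bb.au.apply_symm_apply, Bb.au.apply_symm_apply])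
  have actβ' : ∀ (x : H) (b : B), Bb.au.symm (act x b) = act (Hh.au.symm x) (Bb.au.symm b) :=
    fun x b => Bb.au.injective (by
      rw [Bb.au.apply_symm_apply, hact_au, Hh.au.apply_symm_apply, Bb.au.apply_symm_apply])
  have cancelHH : ∀ t : H ⊗[k] H,
      (TensorProduct.map Hh.au.symm.toLinearMap Hh.au.symm.toLinearMap)
        ((TensorProduct.map Hh.au.toLinearMap Hh.au.toLinearMap) t) = t := fun t => by
    induction t using TensorProduct.induction_on with
    | zero => simp
    | tmul x y => simp
    | add u v hu hv => simp only [map_add]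
                       rw [hu, hv]
  have comulα' : ∀ x : H, Hh.comul (Hh.au.symm x)
      = (TensorProduct.map Hh.au.symm.toLinearMap Hh.au.symm.toLinearMap) (Hh.comul x) := by
    intro x
    conv_rhs => rw [← Hh.au.apply_symm_apply x, Hh.comul_au]
    rw [cancelHH]
  have pairing : ∀ (f : Module.Dual k B) (a b : B),
      TensorProduct.dualDistrib k B B (comulD f) (a ⊗ₜ[k] b) = f (Bb.mul a b) := fun f a b => by
    rw [hcomulD]
    simp
  have ddeq : ∀ z, (TensorProduct.dualDistribEquiv k B B) z = TensorProduct.dualDistrib k B B z :=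
    fun z => by
      rw [TensorProduct.dualDistribEquiv, TensorProduct.dualDistribEquivOfBasis]
      simp [LinearEquiv.ofLinear_apply]
  have ddinj : Function.Injective (TensorProduct.dualDistrib k B B) := fun x y hxy =>
    (TensorProduct.dualDistribEquiv k B B).injective (by rw [ddeq, ddeq, hxy])
  -- ===== left module coalgebra statements =====
  have L1 : ∀ h : H, actL Bb.counit h = Hh.au h := by
    intro h
    rw [hactL]
    have key : ∀ t : H ⊗[k] B,
        (TensorProduct.rid k H) ((TensorProduct.map (Hh.au.toLinearMap ∘ₗ Hh.au.toLinearMap)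
            (Bb.counit ∘ₗ Bb.au.toLinearMap)) t)
          = Hh.au (Hh.au ((TensorProduct.rid k H) ((TensorProduct.map LinearMap.id Bb.counit) t))) := by
      intro t
      induction t using TensorProduct.induction_on with
      | zero => simp
      | tmul x b => simp [Bb.counit_au]
      | add u v hu hv => simp only [map_add]
                         rw [hu, hv]
    rw [key, hρcounit]
    simp
  have L3 : ∀ (f : Module.Dual k B) (h : H),
      Hh.au (actL f h) = actL (f ∘ₗ Bb.au.symm.toLinearMap) (Hh.au h) := by
    intro f h
    rw [hactL, hactL, hρau]
    generalize ρ h = t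
    induction t using TensorProduct.induction_on with
    | zero => simp
    | tmul x b => simp
    | add u v hu hv => simp only [map_add]
                       rw [hu, hv]
  have L5 : ∀ (f : Module.Dual k B) (h : H),
      Hh.counit (actL f h) = f Bb.one * Hh.counit h := by
    intro f h
    rw [hactL]
    have key : ∀ t : H ⊗[k] B,
        Hh.counit ((TensorProduct.rid k H) ((TensorProduct.map (Hh.au.toLinearMap ∘ₗ Hh.au.toLinearMap)
            (f ∘ₗ Bb.au.toLinearMap)) t))
          = f (Bb.au ((TensorProduct.lid k B) ((TensorProduct.map Hh.counit LinearMap.id) t))) := by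
      intro t
      induction t using TensorProduct.induction_on with
      | zero => simp
      | tmul x b => simp [Hh.counit_au, mul_comm]
      | add u v hu hv => simp only [map_add]
                         rw [hu, hv]
    rw [key, hcc2]
    simp [Bb.au_one, mul_comm]
  have L2 : ∀ (f g : Module.Dual k B) (h : H),
      actL (f ∘ₗ Bb.au.symm.toLinearMap) (actL g h) = actL (mulD f g) (Hh.au h) := by
    intro f g h
    have hco := LinearMap.congr_fun hρcoassoc h
    simp only [LinearMap.coe_comp, Function.comp_apply, LinearEquiv.coe_coe] at hco
    rw [hactL g h, hactL (mulD f g) (Hh.au h), hρau]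
    have key1 : ∀ t : H ⊗[k] B,
        actL (f ∘ₗ Bb.au.symm.toLinearMap) ((TensorProduct.rid k H)
            ((TensorProduct.map (Hh.au.toLinearMap ∘ₗ Hh.au.toLinearMap) (g ∘ₗ Bb.au.toLinearMap)) t))
          = ((TensorProduct.rid k H).toLinearMap ∘ₗ (TensorProduct.map
                (Hh.au.toLinearMap ∘ₗ Hh.au.toLinearMap ∘ₗ Hh.au.toLinearMap ∘ₗ Hh.au.toLinearMap)
                ((LinearMap.mul' k k) ∘ₗ (TensorProduct.map
                  (f ∘ₗ Bb.au.toLinearMap ∘ₗ Bb.au.toLinearMap)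
                  (g ∘ₗ Bb.au.toLinearMap ∘ₗ Bb.au.toLinearMap)))))
              ((TensorProduct.assoc k H B B) ((TensorProduct.map ρ Bb.au.symm.toLinearMap) t)) := by
      intro t
      induction t using TensorProduct.induction_on with
      | zero => simp
      | tmul x b =>
        simp only [TensorProduct.map_tmul, LinearMap.comp_apply, LinearEquiv.coe_coe,
          TensorProduct.rid_tmul, map_smul]
        rw [hactL, hρau, hρau]
        generalize ρ x = s
        induction s using TensorProduct.induction_on with
        | zero => simp
        | tmul x' b' => simp [mul_comm, mul_left_comm, smul_smul]
        | add u v hu hv => simp only [map_add, TensorProduct.add_tmul, smul_add] at hu hv ⊢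
                           rw [hu, hv]
      | add u v hu hv => simp only [map_add] at hu hv ⊢
                         rw [hu, hv]
    have key2 : ∀ t : H ⊗[k] B,
        ((TensorProduct.rid k H).toLinearMap ∘ₗ (TensorProduct.map
              (Hh.au.toLinearMap ∘ₗ Hh.au.toLinearMap ∘ₗ Hh.au.toLinearMap ∘ₗ Hh.au.toLinearMap)
              ((LinearMap.mul' k k) ∘ₗ (TensorProduct.map
                (f ∘ₗ Bb.au.toLinearMap ∘ₗ Bb.au.toLinearMap)
                (g ∘ₗ Bb.au.toLinearMap ∘ₗ Bb.au.toLinearMap)))))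
            ((TensorProduct.map Hh.au.symm.toLinearMap Bb.comul) t)
          = (TensorProduct.rid k H) ((TensorProduct.map (Hh.au.toLinearMap ∘ₗ Hh.au.toLinearMap)
              ((mulD f g) ∘ₗ Bb.au.toLinearMap))
              ((TensorProduct.map Hh.au.toLinearMap Bb.au.toLinearMap) t)) := by
      intro t
      induction t using TensorProduct.induction_on with
      | zero => simp
      | tmul x b =>
        simp only [TensorProduct.map_tmul, LinearMap.comp_apply, LinearEquiv.coe_coe,
          TensorProduct.rid_tmul]
        rw [hmulD, Bb.comul_au, Bb.comul_au]
        generalize Bb.comul b = s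
        induction s using TensorProduct.induction_on with
        | zero => simp
        | tmul p q => simp [smul_smul]
        | add u v hu hv => simp only [map_add, add_smul]
                           rw [hu, hv]
      | add u v hu hv => simp only [map_add] at hu hv ⊢
                         rw [hu, hv]
    rw [key1, ← hco, key2]
  have L4 : ∀ (f : Module.Dual k B) (h : H), Hh.comul (actL f h)
      = (TensorProduct.map (TensorProduct.lift actL) (TensorProduct.lift actL))
          ((TensorProduct.tensorTensorTensorComm k (Module.Dual k B) (Module.Dual k B) H H)
            (comulD f ⊗ₜ[k] Hh.comul h)) := by
    intro f h
    rw [hactL]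
    have keyA : ∀ t : H ⊗[k] B,
        Hh.comul ((TensorProduct.rid k H) ((TensorProduct.map (Hh.au.toLinearMap ∘ₗ Hh.au.toLinearMap)
            (f ∘ₗ Bb.au.toLinearMap)) t))
          = (TensorProduct.rid k (H ⊗[k] H)) ((TensorProduct.map
              (TensorProduct.map (Hh.au.toLinearMap ∘ₗ Hh.au.toLinearMap)
                (Hh.au.toLinearMap ∘ₗ Hh.au.toLinearMap))
              (f ∘ₗ Bb.au.toLinearMap)) ((TensorProduct.map Hh.comul LinearMap.id) t)) := by
      intro t
      induction t using TensorProduct.induction_on with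
      | zero => simp
      | tmul x b =>
        simp only [TensorProduct.map_tmul, LinearMap.comp_apply, LinearEquiv.coe_coe,
          TensorProduct.rid_tmul, map_smul, LinearMap.id_coe, id_eq]
        rw [Hh.comul_au, Hh.comul_au]
        generalize Hh.comul x = s
        induction s using TensorProduct.induction_on with
        | zero => simp
        | tmul p q => simp
        | add u v hu hv => simp only [map_add, smul_add] at hu hv ⊢
                           rw [hu, hv]
      | add u v hu hv => simp only [map_add] at hu hv ⊢
                         rw [hu, hv]
    rw [keyA, hcc1]
    generalize Hh.comul h = v
    induction v using TensorProduct.induction_on with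
    | zero => simp
    | tmul h₁ h₂ =>
      have bridge : ∀ u : Module.Dual k B ⊗[k] Module.Dual k B,
          (TensorProduct.map (TensorProduct.lift actL) (TensorProduct.lift actL))
              ((TensorProduct.tensorTensorTensorComm k (Module.Dual k B) (Module.Dual k B) H H)
                (u ⊗ₜ[k] (h₁ ⊗ₜ[k] h₂)))
            = (TensorProduct.rid k (H ⊗[k] H)) ((LinearMap.lTensor (H ⊗[k] H)
                  (TensorProduct.dualDistrib k B B u))
                ((TensorProduct.tensorTensorTensorComm k H B H B)
                  ((TensorProduct.map
                    (TensorProduct.map (Hh.au.toLinearMap ∘ₗ Hh.au.toLinearMap) Bb.au.toLinearMap)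
                    (TensorProduct.map (Hh.au.toLinearMap ∘ₗ Hh.au.toLinearMap) Bb.au.toLinearMap))
                    (ρ h₁ ⊗ₜ[k] ρ h₂)))) := by
        intro u
        induction u using TensorProduct.induction_on with
        | zero => simp
        | tmul f₁ f₂ =>
          simp only [TensorProduct.tensorTensorTensorComm_tmul, TensorProduct.map_tmul,
            TensorProduct.lift.tmul]
          rw [hactL, hactL]
          generalize ρ h₁ = s
          induction s using TensorProduct.induction_on with
          | zero => simp
          | tmul x b =>
            generalize ρ h₂ = t
            induction t using TensorProduct.induction_on with
            | zero => simp
            | tmul y c => simp [← TensorProduct.smul_tmul', smul_smul, mul_comm]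
            | add u' v' hu hv => simp only [map_add, TensorProduct.tmul_add, smul_add] at hu hv ⊢
                                 rw [hu, hv]
          | add u' v' hu hv => simp only [map_add, TensorProduct.add_tmul, smul_add] at hu hv ⊢
                               rw [hu, hv]
        | add u v hu hv =>
          simp only [TensorProduct.add_tmul, map_add, LinearMap.lTensor_add,
            LinearMap.add_apply] at hu hv ⊢
          rw [hu, hv]
      rw [TensorProduct.map_tmul, bridge, hcomulD]
      generalize ρ h₁ = s
      induction s using TensorProduct.induction_on with
      | zero => simp
      | tmul x b =>
        generalize ρ h₂ = t
        induction t using TensorProduct.induction_on with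
        | zero => simp
        | tmul y c => simp [Bb.au_mul]
        | add u' v' hu hv => simp only [map_add, TensorProduct.tmul_add, smul_add] at hu hv ⊢
                             rw [hu, hv]
      | add u' v' hu hv => simp only [map_add, TensorProduct.add_tmul, smul_add] at hu hv ⊢
                           rw [hu, hv]
    | add u v hu hv =>
      simp only [map_add, TensorProduct.tmul_add] at hu hv ⊢
      rw [hu, hv]
  -- ===== right module coalgebra statements =====
  have R1 : ∀ f : Module.Dual k B, actR f Hh.one = f ∘ₗ Bb.au.symm.toLinearMap := by
    intro f
    ext a
    rw [hactR, oneα', hact_one]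
    simp
  have R2 : ∀ (f : Module.Dual k B) (h g : H),
      actR (f ∘ₗ Bb.au.symm.toLinearMap) (Hh.mul h g) = actR (actR f h) (Hh.au g) := by
    intro f h g
    ext a
    simp only [hactR, LinearMap.comp_apply, LinearEquiv.coe_coe, LinearEquiv.symm_apply_apply]
    congr 1
    rw [mulα', actβ', mulα']
    conv_rhs => rw [actβ', actβ', ← Hh.au.apply_symm_apply (Hh.au.symm h), hact_assoc,
      Bb.au.apply_symm_apply]
  have R3 : ∀ (f : Module.Dual k B) (h : H),
      (actR f h) ∘ₗ Bb.au.symm.toLinearMap = actR (f ∘ₗ Bb.au.symm.toLinearMap) (Hh.au h) := by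
    intro f h
    ext a
    simp only [hactR, LinearMap.comp_apply, LinearEquiv.coe_coe, LinearEquiv.symm_apply_apply]
    rw [actβ']
  have R5 : ∀ (f : Module.Dual k B) (h : H),
      (actR f h) Bb.one = f Bb.one * Hh.counit h := by
    intro f h
    rw [hactR, oneβ', oneβ', hact_unit, map_smul, εα']
    simp [mul_comm]
  have R4 : ∀ (f : Module.Dual k B) (h : H), comulD (actR f h)
      = (TensorProduct.map (TensorProduct.lift actR) (TensorProduct.lift actR))
          ((TensorProduct.tensorTensorTensorComm k (Module.Dual k B) (Module.Dual k B) H H)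
            (comulD f ⊗ₜ[k] Hh.comul h)) := by
    intro f h
    apply ddinj
    rw [hcomulD]
    apply TensorProduct.ext'
    intro a b
    have key : ∀ u : Module.Dual k B ⊗[k] Module.Dual k B,
        (TensorProduct.dualDistrib k B B
            ((TensorProduct.map (TensorProduct.lift actR) (TensorProduct.lift actR))
              ((TensorProduct.tensorTensorTensorComm k (Module.Dual k B) (Module.Dual k B) H H)
                (u ⊗ₜ[k] Hh.comul h)))) (a ⊗ₜ[k] b)
          = (TensorProduct.dualDistrib k B B u)
              ((TensorProduct.map
                ((act.flip (Bb.au.symm (Bb.au.symm a))) ∘ₗ Hh.au.symm.toLinearMap)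
                ((act.flip (Bb.au.symm (Bb.au.symm b))) ∘ₗ Hh.au.symm.toLinearMap))
                (Hh.comul h)) := by
      intro u
      induction u using TensorProduct.induction_on with
      | zero => simp
      | tmul f₁ f₂ =>
        generalize Hh.comul h = v
        induction v using TensorProduct.induction_on with
        | zero => simp
        | tmul h₁ h₂ => simp [hactR]
        | add u' v' hu hv => simp only [TensorProduct.tmul_add, map_add, LinearMap.add_apply] at hu hv ⊢
                             rw [hu, hv]
      | add u' v' hu hv => simp only [map_add, TensorProduct.add_tmul, LinearMap.add_apply] at hu hv ⊢
                           rw [hu, hv]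
    rw [key, LinearMap.congr_fun (hcomulD f)]
    simp only [LinearMap.comp_apply, TensorProduct.lift.tmul]
    rw [hactR, mulβ', mulβ', hact_mul, comulα']
    generalize Hh.comul h = v
    induction v using TensorProduct.induction_on with
    | zero => simp
    | tmul h₁ h₂ => simp
    | add u' v' hu hv => simp only [map_add] at hu hv ⊢
                         rw [hu, hv]
  exact ⟨⟨L1, L2, L3, L4, L5⟩, R1, R2, R3, R4, R5⟩
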